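/- Let $T$ be a perfectoid $C$-algebra. Then for every $x\in\mathcal{O}$, the $\mathcal{O}$-module $T^{\circ}/xT^{\circ}$ has no nonzero $\mathfrak{m}$-torsion, i.e. any element of $T^{\circ}/x$ killed by every element of the maximal ideal $\mathfrak{m}\subset\mathcal{O}$ is zero. -/

import Mathlib

def PowerBoundedElt (T : Type) [NormedRing T] (t : T) : Prop :=
  ∃ B : ℝ, ∀ n : ℕ, ‖t ^ n‖ ≤ B

/-!
If `ε • t ∈ x • T^∘` for every `ε ∈ 𝔪` and `x ≠ 0`, then `s = x⁻¹ • t` satisfies `𝔪 • s ⊆ T^∘`.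
Taking `ε = p^{1/k}` (which exists since `C` is algebraically closed) gives
`p • s^k = (ε • s)^k ∈ T^∘`, so `‖s^k‖ ≤ B / ‖p‖` for every `k ≥ 1`, where `B` bounds `T^∘`;
hence `s ∈ T^∘`. If `x = 0`, then `p • t = 0` forces `t = 0`.
-/

theorem PowerBoundedElt.pow {T : Type} [NormedRing T] {t : T} (ht : PowerBoundedElt T t)
    (k : ℕ) : PowerBoundedElt T (t ^ k) := by
  obtain ⟨B, hB⟩ := ht
  exact ⟨B, fun n => by rw [← pow_mul]; exact hB _⟩

theorem powerBoundedElt_of_forall_norm_lt_one_smul {C T : Type} [NormedField C] [IsAlgClosed C]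
    [NormedRing T] [NormedAlgebra C T] {B : ℝ} (hB : ∀ t : T, PowerBoundedElt T t → ‖t‖ ≤ B)
    {π : C} (hπ0 : π ≠ 0) (hπ1 : ‖π‖ < 1) {s : T}
    (hs : ∀ ε : C, ‖ε‖ < 1 → PowerBoundedElt T (ε • s)) : PowerBoundedElt T s := by
  refine ⟨max (B / ‖π‖) ‖(1 : T)‖, ?_⟩
  rintro (_ | k)
  · simp
  obtain ⟨z, hz⟩ := IsAlgClosed.exists_pow_nat_eq π k.succ_pos
  have hz1 : ‖z‖ < 1 :=
    (pow_lt_one_iff_of_nonneg (norm_nonneg z) k.succ_ne_zero).mp (by rwa [← norm_pow, hz])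
  have hbound : ‖π‖ * ‖s ^ (k + 1)‖ ≤ B := by
    simpa only [smul_pow, hz, norm_smul] using hB _ ((hs z hz1).pow (k + 1))
  exact le_max_of_le_left ((le_div_iff₀' (norm_pos_iff.mpr hπ0)).mpr hbound)

theorem perfectoid_powerbounded_no_m_torsion_general
    (p : ℕ)
    (C : Type) [NormedField C] [IsAlgClosed C]
    (hpC : ‖(p : C)‖ < 1) (hpC0 : (0 : ℝ) < ‖(p : C)‖)
    (T : Type) [NormedRing T] [NormedAlgebra C T]
    -- `T^∘` is bounded
    (hbdd : ∃ B : ℝ, ∀ t : T, PowerBoundedElt T t → ‖t‖ ≤ B)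
    (x : C) :
    ∀ t : T, PowerBoundedElt T t →
      (∀ ε : C, ‖ε‖ < 1 → ∃ s : T, PowerBoundedElt T s ∧ ε • t = x • s) →
      ∃ s : T, PowerBoundedElt T s ∧ t = x • s := by
  intro t ht hmt
  have hp0 : (p : C) ≠ 0 := norm_pos_iff.mp hpC0
  rcases eq_or_ne x 0 with rfl | hx0
  · obtain ⟨u, -, hpt⟩ := hmt p hpC
    have ht0 : t = 0 := (smul_eq_zero.mp (hpt.trans (zero_smul C u))).resolve_left hp0
    exact ⟨t, ht, by rw [ht0, smul_zero]⟩
  obtain ⟨B, hB⟩ := hbdd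
  refine ⟨x⁻¹ • t, ?_, (smul_inv_smul₀ hx0 t).symm⟩
  refine powerBoundedElt_of_forall_norm_lt_one_smul hB hp0 hpC fun ε hε => ?_
  obtain ⟨u, hu, hεt⟩ := hmt ε hε
  rwa [smul_comm, hεt, inv_smul_smul₀ hx0]

theorem perfectoid_powerbounded_no_m_torsion
    (p : ℕ) (hp : p.Prime)
    (C : Type) [NormedField C] [CompleteSpace C] [IsAlgClosed C] [CharZero C]
    (hCua : ∀ x y : C, ‖x + y‖ ≤ max ‖x‖ ‖y‖)
    (hpC : ‖(p : C)‖ < 1) (hpC0 : (0 : ℝ) < ‖(p : C)‖)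
    (T : Type) [NormedRing T] [NormedAlgebra C T] [CompleteSpace T]
    (hTua : ∀ x y : T, ‖x + y‖ ≤ max ‖x‖ ‖y‖)
    -- `T^∘` is bounded
    (hbdd : ∃ B : ℝ, ∀ t : T, PowerBoundedElt T t → ‖t‖ ≤ B)
    -- Frobenius is surjective on `T^∘/p`
    (hfrob : ∀ t : T, PowerBoundedElt T t →
      ∃ s u : T, PowerBoundedElt T s ∧ PowerBoundedElt T u ∧ t = s ^ p + (p : T) * u)
    (x : C) (hx : ‖x‖ ≤ 1) :
    ∀ t : T, PowerBoundedElt T t →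
      (∀ ε : C, ‖ε‖ < 1 → ∃ s : T, PowerBoundedElt T s ∧ ε • t = x • s) →
      ∃ s : T, PowerBoundedElt T s ∧ t = x • s :=
  perfectoid_powerbounded_no_m_torsion_general p C hpC hpC0 T hbdd x
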